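/- For every w ∈ ℝ and t ≥ 0, the compound IGCP distribution function satisfies Ĥ(w,t) = 𝟙{w ≥ 0}·exp(−Σ_{j₀=1}^{k₀} μ_{j₀} t (1 − e^{−j₀λ})) + Σ_{m=1}^∞ H^{*(m)}(w)·Σ_{(m₁,…,m_k)∈Ω(k,m)} (Π_{j=1}^k λ_j^{m_j}/m_j!) e^{−μ t} Σ_{r₁+⋯+r_{k₀}=z_k} z_k!·Π_{j₀=1}^{k₀} (j₀^{r_{j₀}}/r_{j₀}!) e^{μ_{j₀} t e^{−j₀λ}} 𝓑_{r_{j₀}}(e^{−j₀λ} μ_{j₀} t), where z_k = m₁+⋯+m_k. -/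

import Mathlib

open MeasureTheory

/-- GCP state probabilities: `p(n,t) = ∑_{Ω(k,n)} ∏_j ((λ_j t)^{x_j}/x_j!) e^{−λ_j t}`,
where index `j : Fin k` encodes jump size `j+1`. -/
noncomputable def gcpPmf (k : ℕ) (lam : Fin k → ℝ) (n : ℕ) (t : ℝ) : ℝ :=
  ∑' x : Fin k → ℕ,
    if (∑ j : Fin k, ((j : ℕ) + 1) * x j) = n then
      ∏ j : Fin k, (lam j * t) ^ (x j) / (Nat.factorial (x j)) * Real.exp (-(lam j * t))
    else 0

/-- IGCP state probabilities: `p̂(n,t) = ∑_{s=0}^∞ p(n,s) p₀(s,t)`. -/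
noncomputable def igcpPmf (k : ℕ) (lam : Fin k → ℝ) (k0 : ℕ) (mu : Fin k0 → ℝ)
    (n : ℕ) (t : ℝ) : ℝ :=
  ∑' s : ℕ, gcpPmf k lam n s * gcpPmf k0 mu s t

/-- The `n`-th order Bell polynomial `𝓑_n(x) = e^{−x} ∑_{r=0}^∞ r^n x^r / r!`. -/
noncomputable def bellPoly (n : ℕ) (x : ℝ) : ℝ :=
  Real.exp (-x) * ∑' r : ℕ, (r : ℝ) ^ n * x ^ r / (Nat.factorial r)

/-- The `m`-fold convolution of the distribution function of a probability measure `ν`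
on ℝ: `H^{*(0)}(w) = 𝟙{w ≥ 0}` and `H^{*(m+1)}(w) = ∫ H^{*(m)}(w − y) ν(dy)`.
In particular `H^{*(1)} = H` is the cdf of `ν`. -/
noncomputable def convCdf (ν : Measure ℝ) : ℕ → ℝ → ℝ
  | 0, w => if 0 ≤ w then 1 else 0
  | m + 1, w => ∫ y, convCdf ν m (w - y) ∂ν

/-!
Splitting `p(n,s)` as `∑_{Ω(k,n)} (∏ λ_j^{m_j}/m_j!) s^{z} e^{-λ s}` with `z = m₁ + ⋯ + m_k`
reduces `p̂(n,t)` to the moments `E[N₀(t)^z e^{-λ N₀(t)}]` of the outer GCP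
`N₀(t) = ∑ j₀ X_{j₀}` with independent `X_{j₀} ~ Poisson(μ_{j₀} t)`. The multinomial theorem
for `N₀(t)^z` factorises these moments into one-dimensional series
`∑_x x^r y^x / x! = e^y 𝓑_r(y)`. All series have nonnegative terms, so the rearrangements are
done in `ℝ≥0∞`; finally the `m = 0` term is split off from `∑ p̂(m,t) H^{*(m)}(w)`, which
converges because `0 ≤ H^{*(m)} ≤ 1`.
-/

open Finset Real
open scoped ENNReal Nat

theorem ENNReal.tsum_fin_pi_prod {β : Type*} :
    ∀ {k : ℕ} (g : Fin k → β → ℝ≥0∞), ∑' x : Fin k → β, ∏ j, g j (x j) = ∏ j, ∑' b, g j b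
  | 0, g => by simp
  | k + 1, g => by
    rw [← (Fin.consEquiv fun _ => β).tsum_eq, ENNReal.tsum_prod', Fin.prod_univ_succ,
      ← ENNReal.tsum_fin_pi_prod fun j => g j.succ, ← ENNReal.tsum_mul_right]
    simp [Fin.consEquiv, Fin.prod_univ_succ, ENNReal.tsum_mul_left]

theorem summable_of_tsum_ofReal_ne_top {α : Type*} {f : α → ℝ} (hf : ∀ a, 0 ≤ f a)
    (h : ∑' a, ENNReal.ofReal (f a) ≠ ∞) : Summable f :=
  (ENNReal.summable_toReal h).congr fun a => ENNReal.toReal_ofReal (hf a)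

theorem ENNReal.ofReal_tsum_of_tsum_ofReal_ne_top {α : Type*} {f : α → ℝ} (hf : ∀ a, 0 ≤ f a)
    (h : ∑' a, ENNReal.ofReal (f a) ≠ ∞) :
    ENNReal.ofReal (∑' a, f a) = ∑' a, ENNReal.ofReal (f a) :=
  ENNReal.ofReal_tsum_of_nonneg hf (summable_of_tsum_ofReal_ne_top hf h)

theorem ENNReal.tsum_ofReal_of_hasSum {α : Type*} {f : α → ℝ} {a : ℝ} (hf : ∀ i, 0 ≤ f i)
    (h : HasSum f a) : ∑' i, ENNReal.ofReal (f i) = ENNReal.ofReal a := by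
  rw [← ENNReal.ofReal_tsum_of_nonneg hf h.summable, h.tsum_eq]

theorem Real.hasSum_pow_div_factorial (x : ℝ) : HasSum (fun n : ℕ => x ^ n / n !) (exp x) := by
  rw [Real.exp_eq_exp_ℝ]
  exact NormedSpace.expSeries_div_hasSum_exp x

theorem summable_natCast_pow_mul_pow_div_factorial (r : ℕ) (y : ℝ) :
    Summable fun n : ℕ => (n : ℝ) ^ r * y ^ n / n ! := by
  refine (Real.summable_pow_div_factorial (2 ^ r * |y|)).of_norm_bounded fun n => ?_
  have hn : (n : ℝ) ^ r ≤ (2 ^ r) ^ n := by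
    rw [← pow_mul, mul_comm, pow_mul]
    exact pow_le_pow_left₀ n.cast_nonneg (mod_cast n.lt_two_pow_self.le) r
  rw [norm_div, norm_mul, norm_pow, norm_pow, Real.norm_natCast, Real.norm_natCast,
    Real.norm_eq_abs, mul_pow]
  gcongr

theorem hasSum_natCast_pow_mul_pow_div_factorial (r : ℕ) (y : ℝ) :
    HasSum (fun n : ℕ => (n : ℝ) ^ r * y ^ n / n !) (exp y * bellPoly r y) := by
  rw [bellPoly, ← mul_assoc, ← Real.exp_add, add_neg_cancel, Real.exp_zero, one_mul]
  exact (summable_natCast_pow_mul_pow_div_factorial r y).hasSum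

theorem bellPoly_zero (y : ℝ) : bellPoly 0 y = 1 := by
  simp only [bellPoly, pow_zero, one_mul, (Real.hasSum_pow_div_factorial y).tsum_eq,
    ← Real.exp_add, neg_add_cancel, Real.exp_zero]

theorem bellPoly_nonneg (r : ℕ) {y : ℝ} (hy : 0 ≤ y) : 0 ≤ bellPoly r y :=
  mul_nonneg (exp_nonneg _) (tsum_nonneg fun n => by positivity)

def jumpSum {k : ℕ} (x : Fin k → ℕ) : ℕ := ∑ j : Fin k, ((j : ℕ) + 1) * x j

noncomputable def gcpWeight {k : ℕ} (lam : Fin k → ℝ) (t : ℝ) (x : Fin k → ℕ) : ℝ :=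
  ∏ j, (lam j * t) ^ x j / (x j)! * exp (-(lam j * t))

section GCP

variable {k : ℕ} {lam : Fin k → ℝ} {t : ℝ}

theorem jumpSum_eq_zero_iff {x : Fin k → ℕ} : jumpSum x = 0 ↔ x = 0 := by
  simp [jumpSum, sum_eq_zero_iff, funext_iff]

theorem gcpPmf_eq_tsum_gcpWeight (n : ℕ) :
    gcpPmf k lam n t = ∑' x, if jumpSum x = n then gcpWeight lam t x else 0 :=
  rfl

theorem gcpWeight_nonneg (hlam : ∀ j, 0 ≤ lam j) (ht : 0 ≤ t) (x : Fin k → ℕ) :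
    0 ≤ gcpWeight lam t x :=
  prod_nonneg fun j _ => by have := hlam j; positivity

theorem gcpWeight_eq_mul (x : Fin k → ℕ) :
    gcpWeight lam t x =
      (∏ j, lam j ^ x j / (x j)!) * (t ^ (∑ j, x j) * exp (-((∑ j, lam j) * t))) := by
  rw [gcpWeight, ← prod_pow_eq_pow_sum, sum_mul, ← sum_neg_distrib, Real.exp_sum,
    ← prod_mul_distrib, ← prod_mul_distrib]
  exact prod_congr rfl fun j _ => by ring

theorem tsum_ofReal_gcpWeight (hlam : ∀ j, 0 ≤ lam j) (ht : 0 ≤ t) :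
    ∑' x, ENNReal.ofReal (gcpWeight lam t x) = 1 := by
  have hfactor (j : Fin k) :
      ∑' m : ℕ, ENNReal.ofReal ((lam j * t) ^ m / m ! * exp (-(lam j * t))) = 1 := by
    rw [ENNReal.tsum_ofReal_of_hasSum (fun m => by have := hlam j; positivity)
      ((Real.hasSum_pow_div_factorial _).mul_right _), ← Real.exp_add, add_neg_cancel,
      Real.exp_zero, ENNReal.ofReal_one]
  have hprod (x : Fin k → ℕ) : ENNReal.ofReal (gcpWeight lam t x) =
      ∏ j, ENNReal.ofReal ((lam j * t) ^ x j / (x j)! * exp (-(lam j * t))) :=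
    ENNReal.ofReal_prod_of_nonneg fun j _ => by have := hlam j; positivity
  simp_rw [hprod, ENNReal.tsum_fin_pi_prod
    (fun j m => ENNReal.ofReal ((lam j * t) ^ m / m ! * exp (-(lam j * t)))), hfactor,
    prod_const_one]

theorem ofReal_gcpPmf (hlam : ∀ j, 0 ≤ lam j) (ht : 0 ≤ t) (n : ℕ) :
    ENNReal.ofReal (gcpPmf k lam n t) =
      ∑' x, if jumpSum x = n then ENNReal.ofReal (gcpWeight lam t x) else 0 := by
  have hnn (x : Fin k → ℕ) : 0 ≤ if jumpSum x = n then gcpWeight lam t x else 0 := by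
    split_ifs
    exacts [gcpWeight_nonneg hlam ht x, le_rfl]
  have hfin : ∑' x, ENNReal.ofReal (if jumpSum x = n then gcpWeight lam t x else 0) ≠ ∞ := by
    refine ne_top_of_le_ne_top ENNReal.one_ne_top ?_
    rw [← tsum_ofReal_gcpWeight hlam ht]
    refine ENNReal.tsum_le_tsum fun x => ENNReal.ofReal_le_ofReal ?_
    split_ifs
    exacts [le_rfl, gcpWeight_nonneg hlam ht x]
  rw [gcpPmf_eq_tsum_gcpWeight, ENNReal.ofReal_tsum_of_tsum_ofReal_ne_top hnn hfin]
  simp_rw [apply_ite ENNReal.ofReal, ENNReal.ofReal_zero]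

theorem tsum_mul_ofReal_gcpPmf (hlam : ∀ j, 0 ≤ lam j) (ht : 0 ≤ t) (g : ℕ → ℝ≥0∞) :
    ∑' s, g s * ENNReal.ofReal (gcpPmf k lam s t) =
      ∑' x, g (jumpSum x) * ENNReal.ofReal (gcpWeight lam t x) := by
  simp_rw [ofReal_gcpPmf hlam ht, ← ENNReal.tsum_mul_left, mul_ite, mul_zero]
  rw [ENNReal.tsum_comm]
  refine tsum_congr fun x => ?_
  simp_rw [eq_comm (a := jumpSum x)]
  exact tsum_ite_eq _ _

theorem tsum_ofReal_gcpPmf (hlam : ∀ j, 0 ≤ lam j) (ht : 0 ≤ t) :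
    ∑' s, ENNReal.ofReal (gcpPmf k lam s t) = 1 := by
  simpa [tsum_ofReal_gcpWeight hlam ht] using tsum_mul_ofReal_gcpPmf hlam ht 1

theorem gcpPmf_nonneg (hlam : ∀ j, 0 ≤ lam j) (ht : 0 ≤ t) (n : ℕ) : 0 ≤ gcpPmf k lam n t :=
  tsum_nonneg fun x => by
    split_ifs
    exacts [gcpWeight_nonneg hlam ht x, le_rfl]

end GCP

/-- The inner sum over `r₁ + ⋯ + r_{k₀} = z` in the Bell-polynomial formula, with `L` in place
of the total rate `λ`. -/
noncomputable def bellSum (k0 : ℕ) (mu : Fin k0 → ℝ) (t L : ℝ) (z : ℕ) : ℝ :=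
  ∑' r : Fin k0 → ℕ,
    if ∑ j0, r j0 = z then
      (z ! : ℝ) *
        ∏ j0 : Fin k0,
          (((j0 : ℕ) + 1 : ℝ) ^ r j0 / (r j0)!) *
            exp (mu j0 * t * exp (-(((j0 : ℕ) + 1 : ℝ) * L))) *
            bellPoly (r j0) (exp (-(((j0 : ℕ) + 1 : ℝ) * L)) * mu j0 * t)
    else 0

section Moment

variable {k0 : ℕ} {mu : Fin k0 → ℝ} {t : ℝ} (L : ℝ)

theorem bellSum_eq_sum (z : ℕ) :
    bellSum k0 mu t L z = ∑ r ∈ piAntidiag univ z,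
      (z ! : ℝ) *
        ∏ j0 : Fin k0,
          (((j0 : ℕ) + 1 : ℝ) ^ r j0 / (r j0)!) *
            exp (mu j0 * t * exp (-(((j0 : ℕ) + 1 : ℝ) * L))) *
            bellPoly (r j0) (exp (-(((j0 : ℕ) + 1 : ℝ) * L)) * mu j0 * t) := by
  rw [bellSum, tsum_eq_sum (s := piAntidiag univ z)
    fun r hr => if_neg fun h => hr (by simp [mem_piAntidiag, h])]
  exact sum_congr rfl fun r hr => if_pos (mem_piAntidiag.mp hr).1

theorem bellSum_zero : bellSum k0 mu t L 0 =
    exp (∑ j0 : Fin k0, mu j0 * t * exp (-(((j0 : ℕ) + 1 : ℝ) * L))) := by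
  simp [bellSum_eq_sum, bellPoly_zero, Real.exp_sum]

theorem pow_mul_exp_mul_gcpWeight (z : ℕ) (x : Fin k0 → ℕ) :
    (jumpSum x : ℝ) ^ z * exp (-(L * jumpSum x)) * gcpWeight mu t x =
      ∑ r ∈ piAntidiag univ z, (Nat.multinomial univ r : ℝ) *
        ∏ j0 : Fin k0, (((j0 : ℕ) + 1 : ℝ) ^ r j0 * exp (-(mu j0 * t))) *
          ((x j0 : ℝ) ^ r j0 * (exp (-(((j0 : ℕ) + 1 : ℝ) * L)) * mu j0 * t) ^ x j0 /
            (x j0)!) := by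
  have hsum : (jumpSum x : ℝ) = ∑ j0 : Fin k0, ((j0 : ℕ) + 1 : ℝ) * x j0 := by
    simp [jumpSum]
  have hexp :
      exp (-(L * jumpSum x)) = ∏ j0 : Fin k0, exp (-(((j0 : ℕ) + 1 : ℝ) * L)) ^ x j0 := by
    simp_rw [← Real.exp_nat_mul, ← Real.exp_sum, hsum, mul_sum, ← sum_neg_distrib]
    exact congrArg exp (sum_congr rfl fun j0 _ => by ring)
  rw [hexp, hsum, sum_pow_eq_sum_piAntidiag, sum_mul, sum_mul]
  refine sum_congr rfl fun r _ => ?_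
  rw [gcpWeight, mul_assoc, mul_assoc, ← prod_mul_distrib, ← prod_mul_distrib]
  congr 1
  exact prod_congr rfl fun j0 _ => by rw [mul_pow, mul_pow, mul_pow]; ring

theorem bellSum_nonneg (hmu : ∀ j0, 0 ≤ mu j0) (ht : 0 ≤ t) (z : ℕ) :
    0 ≤ bellSum k0 mu t L z := by
  rw [bellSum_eq_sum]
  refine sum_nonneg fun r _ => mul_nonneg (Nat.cast_nonneg _) (prod_nonneg fun j0 _ => ?_)
  have := hmu j0
  exact mul_nonneg (by positivity) (bellPoly_nonneg _ (by positivity))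

theorem exp_neg_mul_bellSum_eq_sum (z : ℕ) :
    exp (-((∑ j0, mu j0) * t)) * bellSum k0 mu t L z =
      ∑ r ∈ piAntidiag univ z, (Nat.multinomial univ r : ℝ) *
        ∏ j0 : Fin k0, (((j0 : ℕ) + 1 : ℝ) ^ r j0 * exp (-(mu j0 * t))) *
          (exp (exp (-(((j0 : ℕ) + 1 : ℝ) * L)) * mu j0 * t) *
            bellPoly (r j0) (exp (-(((j0 : ℕ) + 1 : ℝ) * L)) * mu j0 * t)) := by
  rw [bellSum_eq_sum, mul_sum]
  refine sum_congr rfl fun r hr => ?_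
  have hfact : (z ! : ℝ) = Nat.multinomial univ r * ∏ j0, ((r j0)! : ℝ) := by
    rw [← (mem_piAntidiag.mp hr).1]
    exact_mod_cast (Nat.multinomial_spec univ r).symm.trans (mul_comm _ _)
  have hexp : exp (-((∑ j0, mu j0) * t)) = ∏ j0, exp (-(mu j0 * t)) := by
    rw [← Real.exp_sum, sum_mul, sum_neg_distrib]
  rw [hfact, hexp]
  simp only [mul_assoc, mul_left_comm _ (Nat.multinomial univ r : ℝ)]
  congr 1
  simp only [← prod_mul_distrib]
  refine prod_congr rfl fun j0 _ => ?_
  field_simp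

theorem tsum_ofReal_pow_mul_exp_mul_gcpPmf (hmu : ∀ j0, 0 ≤ mu j0) (ht : 0 ≤ t) (z : ℕ) :
    ∑' s : ℕ, ENNReal.ofReal ((s : ℝ) ^ z * exp (-(L * s))) *
        ENNReal.ofReal (gcpPmf k0 mu s t) =
      ENNReal.ofReal (exp (-((∑ j0, mu j0) * t)) * bellSum k0 mu t L z) := by
  set y : Fin k0 → ℝ := fun j0 => exp (-(((j0 : ℕ) + 1 : ℝ) * L)) * mu j0 * t
  set c : Fin k0 → ℕ → ℝ := fun j0 q => ((j0 : ℕ) + 1 : ℝ) ^ q * exp (-(mu j0 * t))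
  have hy (j0 : Fin k0) : 0 ≤ y j0 := by have := hmu j0; positivity
  have hc (j0 : Fin k0) (q : ℕ) : 0 ≤ c j0 q := by positivity
  have hf (j0 : Fin k0) (q m : ℕ) : 0 ≤ c j0 q * ((m : ℝ) ^ q * y j0 ^ m / m !) := by
    have := hy j0; have := hc j0 q; positivity
  have hterm (x : Fin k0 → ℕ) :
      ENNReal.ofReal ((jumpSum x : ℝ) ^ z * exp (-(L * jumpSum x))) *
          ENNReal.ofReal (gcpWeight mu t x) =
        ∑ r ∈ piAntidiag univ z, ENNReal.ofReal (Nat.multinomial univ r) *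
          ∏ j0, ENNReal.ofReal (c j0 (r j0) * ((x j0 : ℝ) ^ r j0 * y j0 ^ x j0 / (x j0)!)) := by
    rw [← ENNReal.ofReal_mul (by positivity), pow_mul_exp_mul_gcpWeight,
      ENNReal.ofReal_sum_of_nonneg fun r _ =>
        mul_nonneg (Nat.multinomial univ r).cast_nonneg (prod_nonneg fun j0 _ => hf _ _ _)]
    refine sum_congr rfl fun r _ => ?_
    rw [ENNReal.ofReal_mul (Nat.cast_nonneg _),
      ENNReal.ofReal_prod_of_nonneg fun j0 _ => hf _ _ _]
  have hfactor (r : Fin k0 → ℕ) (j0 : Fin k0) :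
      ∑' m : ℕ, ENNReal.ofReal (c j0 (r j0) * ((m : ℝ) ^ r j0 * y j0 ^ m / m !)) =
        ENNReal.ofReal (c j0 (r j0) * (exp (y j0) * bellPoly (r j0) (y j0))) :=
    ENNReal.tsum_ofReal_of_hasSum (hf _ _)
      ((hasSum_natCast_pow_mul_pow_div_factorial _ _).mul_left _)
  have hg (r : Fin k0 → ℕ) (j0 : Fin k0) :
      0 ≤ c j0 (r j0) * (exp (y j0) * bellPoly (r j0) (y j0)) :=
    mul_nonneg (hc _ _) (mul_nonneg (exp_nonneg _) (bellPoly_nonneg _ (hy j0)))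
  rw [tsum_mul_ofReal_gcpPmf hmu ht, tsum_congr hterm,
    Summable.tsum_finsetSum fun _ _ => ENNReal.summable, exp_neg_mul_bellSum_eq_sum,
    ENNReal.ofReal_sum_of_nonneg fun r _ =>
      mul_nonneg (Nat.multinomial univ r).cast_nonneg (prod_nonneg fun j0 _ => hg _ _)]
  refine sum_congr rfl fun r _ => ?_
  rw [ENNReal.tsum_mul_left, ENNReal.tsum_fin_pi_prod fun j0 (m : ℕ) =>
    ENNReal.ofReal (c j0 (r j0) * ((m : ℝ) ^ r j0 * y j0 ^ m / m !))]
  simp_rw [hfactor]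
  rw [ENNReal.ofReal_mul (Nat.cast_nonneg _), ENNReal.ofReal_prod_of_nonneg fun j0 _ => hg _ _]

end Moment

section IGCP

variable {k : ℕ} {lam : Fin k → ℝ} {k0 : ℕ} {mu : Fin k0 → ℝ} {t : ℝ}

theorem igcpPmf_nonneg (hlam : ∀ j, 0 ≤ lam j) (hmu : ∀ j0, 0 ≤ mu j0) (ht : 0 ≤ t) (n : ℕ) :
    0 ≤ igcpPmf k lam k0 mu n t :=
  tsum_nonneg fun s => mul_nonneg (gcpPmf_nonneg hlam s.cast_nonneg n) (gcpPmf_nonneg hmu ht s)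

theorem ofReal_igcpPmf (hlam : ∀ j, 0 ≤ lam j) (hmu : ∀ j0, 0 ≤ mu j0) (ht : 0 ≤ t) (n : ℕ) :
    ENNReal.ofReal (igcpPmf k lam k0 mu n t) =
      ∑' s : ℕ, ENNReal.ofReal (gcpPmf k lam n s) * ENNReal.ofReal (gcpPmf k0 mu s t) := by
  have hmul (s : ℕ) : ENNReal.ofReal (gcpPmf k lam n s * gcpPmf k0 mu s t) =
      ENNReal.ofReal (gcpPmf k lam n s) * ENNReal.ofReal (gcpPmf k0 mu s t) :=
    ENNReal.ofReal_mul (gcpPmf_nonneg hlam s.cast_nonneg n)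
  have hle :
      ∑' s : ℕ, ENNReal.ofReal (gcpPmf k lam n s) * ENNReal.ofReal (gcpPmf k0 mu s t) ≤ 1 :=
    calc _ ≤ ∑' s : ℕ, ENNReal.ofReal (gcpPmf k0 mu s t) :=
          ENNReal.tsum_le_tsum fun s => mul_le_of_le_one_left' <|
            (ENNReal.le_tsum n).trans_eq (tsum_ofReal_gcpPmf hlam s.cast_nonneg)
      _ = 1 := tsum_ofReal_gcpPmf hmu ht
  rw [igcpPmf, ENNReal.ofReal_tsum_of_tsum_ofReal_ne_top
    (fun s => mul_nonneg (gcpPmf_nonneg hlam s.cast_nonneg n) (gcpPmf_nonneg hmu ht s))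
    (by rw [tsum_congr hmul]; exact ne_top_of_le_ne_top ENNReal.one_ne_top hle),
    tsum_congr hmul]

theorem summable_igcpPmf (hlam : ∀ j, 0 ≤ lam j) (hmu : ∀ j0, 0 ≤ mu j0) (ht : 0 ≤ t) :
    Summable fun n => igcpPmf k lam k0 mu n t := by
  refine summable_of_tsum_ofReal_ne_top (igcpPmf_nonneg hlam hmu ht) ?_
  simp only [ofReal_igcpPmf hlam hmu ht]
  rw [ENNReal.tsum_comm]
  simp only [ENNReal.tsum_mul_right, tsum_ofReal_gcpPmf hlam, Nat.cast_nonneg, one_mul,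
    tsum_ofReal_gcpPmf hmu ht]
  exact ENNReal.one_ne_top

theorem igcpPmf_eq_tsum_bellSum (hlam : ∀ j, 0 ≤ lam j) (hmu : ∀ j0, 0 ≤ mu j0) (ht : 0 ≤ t)
    (n : ℕ) :
    igcpPmf k lam k0 mu n t = ∑' mv : Fin k → ℕ,
      if jumpSum mv = n then
        (∏ j, lam j ^ mv j / (mv j)!) * exp (-((∑ j0, mu j0) * t)) *
          bellSum k0 mu t (∑ j, lam j) (∑ j, mv j)
      else 0 := by
  set L := ∑ j, lam j
  have hC (mv : Fin k → ℕ) : 0 ≤ ∏ j, lam j ^ mv j / (mv j)! :=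
    prod_nonneg fun j _ => by have := hlam j; positivity
  have hF (mv : Fin k → ℕ) : 0 ≤ if jumpSum mv = n then
        (∏ j, lam j ^ mv j / (mv j)!) * exp (-((∑ j0, mu j0) * t)) *
          bellSum k0 mu t L (∑ j, mv j)
      else 0 := by
    split_ifs
    exacts [mul_nonneg (mul_nonneg (hC mv) (exp_nonneg _)) (bellSum_nonneg L hmu ht _), le_rfl]
  have hofReal : ∑' mv, ENNReal.ofReal (if jumpSum mv = n then
        (∏ j, lam j ^ mv j / (mv j)!) * exp (-((∑ j0, mu j0) * t)) *
          bellSum k0 mu t L (∑ j, mv j)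
      else 0) = ENNReal.ofReal (igcpPmf k lam k0 mu n t) := by
    rw [ofReal_igcpPmf hlam hmu ht]
    calc _ = ∑' (mv : Fin k → ℕ) (s : ℕ), if jumpSum mv = n then
            ENNReal.ofReal (∏ j, lam j ^ mv j / (mv j)!) *
              ENNReal.ofReal ((s : ℝ) ^ (∑ j, mv j) * exp (-(L * s))) *
              ENNReal.ofReal (gcpPmf k0 mu s t) else 0 := by
          refine tsum_congr fun mv => ?_
          split_ifs
          · simp_rw [mul_assoc, ENNReal.tsum_mul_left,
              tsum_ofReal_pow_mul_exp_mul_gcpPmf L hmu ht,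
              ← ENNReal.ofReal_mul (hC mv)]
          · simp
      _ = ∑' (s : ℕ) (mv : Fin k → ℕ), if jumpSum mv = n then
            ENNReal.ofReal (∏ j, lam j ^ mv j / (mv j)!) *
              ENNReal.ofReal ((s : ℝ) ^ (∑ j, mv j) * exp (-(L * s))) *
              ENNReal.ofReal (gcpPmf k0 mu s t) else 0 := ENNReal.tsum_comm
      _ = _ := by
          refine tsum_congr fun s => ?_
          rw [ofReal_gcpPmf hlam s.cast_nonneg, ← ENNReal.tsum_mul_right]
          refine tsum_congr fun mv => ?_
          split_ifs
          · rw [gcpWeight_eq_mul, ENNReal.ofReal_mul (hC mv), mul_comm L]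
          · simp
  rw [← ENNReal.ofReal_eq_ofReal_iff (igcpPmf_nonneg hlam hmu ht n) (tsum_nonneg hF),
    ENNReal.ofReal_tsum_of_tsum_ofReal_ne_top hF (hofReal ▸ ENNReal.ofReal_ne_top), hofReal]

theorem igcpPmf_zero (hlam : ∀ j, 0 ≤ lam j) (hmu : ∀ j0, 0 ≤ mu j0) (ht : 0 ≤ t) :
    igcpPmf k lam k0 mu 0 t = exp (-(∑ j0 : Fin k0, mu j0 * t *
      (1 - exp (-(((j0 : ℕ) + 1 : ℝ) * ∑ j : Fin k, lam j))))) := by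
  rw [igcpPmf_eq_tsum_bellSum hlam hmu ht,
    tsum_eq_single 0 fun mv hmv => if_neg (jumpSum_eq_zero_iff.not.mpr hmv)]
  simp only [jumpSum_eq_zero_iff, if_true, Pi.zero_apply, pow_zero, Nat.factorial_zero,
    Nat.cast_one, div_one, prod_const_one, sum_const_zero, bellSum_zero, one_mul, ← Real.exp_add]
  congr 1
  simp only [sum_mul, mul_sub, mul_one, sum_sub_distrib]
  ring

end IGCP

theorem monotone_convCdf_and_mem_Icc (ν : Measure ℝ) [IsProbabilityMeasure ν] (m : ℕ) :
    Monotone (convCdf ν m) ∧ ∀ w, convCdf ν m w ∈ Set.Icc 0 1 := by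
  induction m with
  | zero =>
    refine ⟨fun a b hab => ?_, fun w => ?_⟩ <;> simp only [convCdf]
    · split_ifs <;> linarith
    · split_ifs <;> norm_num
  | succ m ih =>
    obtain ⟨hmono, hIcc⟩ := ih
    -- monotonicity is carried along only to get measurability
    have hintegrable (w : ℝ) : Integrable (fun y => convCdf ν m (w - y)) ν :=
      Integrable.of_mem_Icc 0 1
        (hmono.measurable.comp (measurable_const.sub measurable_id)).aemeasurable
        (ae_of_all _ fun y => hIcc (w - y))
    refine ⟨fun a b hab =>
        integral_mono (hintegrable a) (hintegrable b) fun y => hmono (by linarith),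
      fun w => ⟨integral_nonneg fun y => (hIcc _).1, ?_⟩⟩
    calc ∫ y, convCdf ν m (w - y) ∂ν ≤ ∫ _, (1 : ℝ) ∂ν :=
          integral_mono (hintegrable w) (integrable_const 1) fun y => (hIcc _).2
      _ = 1 := by simp

theorem compound_igcp_cdf_general (k : ℕ) (lam : Fin k → ℝ) (hlam : ∀ j, 0 < lam j)
    (k0 : ℕ) (mu : Fin k0 → ℝ) (hmu : ∀ j0, 0 < mu j0)
    (ν : Measure ℝ) [IsProbabilityMeasure ν]
    (w : ℝ) (t : ℝ) (ht : 0 ≤ t) :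
    ∑' m : ℕ, igcpPmf k lam k0 mu m t * convCdf ν m w =
      (if 0 ≤ w then 1 else 0) *
          Real.exp (-(∑ j0 : Fin k0, mu j0 * t *
            (1 - Real.exp (-(((j0 : ℕ) + 1 : ℝ) * ∑ j : Fin k, lam j))))) +
        ∑' m : ℕ, convCdf ν (m + 1) w *
          ∑' mv : Fin k → ℕ,
            if (∑ j : Fin k, ((j : ℕ) + 1) * mv j) = m + 1 then
              (∏ j : Fin k, lam j ^ (mv j) / (Nat.factorial (mv j))) *
                Real.exp (-((∑ j0 : Fin k0, mu j0) * t)) *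
                ∑' r : Fin k0 → ℕ,
                  if (∑ j0 : Fin k0, r j0) = (∑ j : Fin k, mv j) then
                    (Nat.factorial (∑ j : Fin k, mv j) : ℝ) *
                      ∏ j0 : Fin k0,
                        (((j0 : ℕ) + 1 : ℝ) ^ (r j0) / (Nat.factorial (r j0))) *
                          Real.exp (mu j0 * t *
                            Real.exp (-(((j0 : ℕ) + 1 : ℝ) * ∑ j : Fin k, lam j))) *
                          bellPoly (r j0)
                            (Real.exp (-(((j0 : ℕ) + 1 : ℝ) * ∑ j : Fin k, lam j)) *
                              mu j0 * t)
                  else 0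
            else 0 := by
  have hlam' (j : Fin k) : 0 ≤ lam j := (hlam j).le
  have hmu' (j0 : Fin k0) : 0 ≤ mu j0 := (hmu j0).le
  have hH (m : ℕ) := (monotone_convCdf_and_mem_Icc ν m).2 w
  have hp := igcpPmf_nonneg hlam' hmu' ht
  have hsum : Summable fun m => igcpPmf k lam k0 mu m t * convCdf ν m w :=
    (summable_igcpPmf hlam' hmu' ht).of_nonneg_of_le (fun m => mul_nonneg (hp m) (hH m).1)
      fun m => mul_le_of_le_one_right (hp m) (hH m).2
  rw [hsum.tsum_eq_zero_add, igcpPmf_zero hlam' hmu' ht, mul_comm]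
  congr 1
  exact tsum_congr fun m => by rw [igcpPmf_eq_tsum_bellSum hlam' hmu' ht, mul_comm]; rfl

/-- the distribution function of the compound IGCP
`Ĥ(w,t) = ∑_{m=0}^∞ p̂(m,t) H^{*(m)}(w)` in terms of Bell polynomials. -/
theorem compound_igcp_cdf (k : ℕ) (hk : 0 < k) (lam : Fin k → ℝ) (hlam : ∀ j, 0 < lam j)
    (k0 : ℕ) (hk0 : 0 < k0) (mu : Fin k0 → ℝ) (hmu : ∀ j0, 0 < mu j0)
    (ν : Measure ℝ) [IsProbabilityMeasure ν]
    (w : ℝ) (t : ℝ) (ht : 0 ≤ t) :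
    ∑' m : ℕ, igcpPmf k lam k0 mu m t * convCdf ν m w =
      (if 0 ≤ w then 1 else 0) *
          Real.exp (-(∑ j0 : Fin k0, mu j0 * t *
            (1 - Real.exp (-(((j0 : ℕ) + 1 : ℝ) * ∑ j : Fin k, lam j))))) +
        ∑' m : ℕ, convCdf ν (m + 1) w *
          ∑' mv : Fin k → ℕ,
            if (∑ j : Fin k, ((j : ℕ) + 1) * mv j) = m + 1 then
              (∏ j : Fin k, lam j ^ (mv j) / (Nat.factorial (mv j))) *
                Real.exp (-((∑ j0 : Fin k0, mu j0) * t)) *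
                ∑' r : Fin k0 → ℕ,
                  if (∑ j0 : Fin k0, r j0) = (∑ j : Fin k, mv j) then
                    (Nat.factorial (∑ j : Fin k, mv j) : ℝ) *
                      ∏ j0 : Fin k0,
                        (((j0 : ℕ) + 1 : ℝ) ^ (r j0) / (Nat.factorial (r j0))) *
                          Real.exp (mu j0 * t *
                            Real.exp (-(((j0 : ℕ) + 1 : ℝ) * ∑ j : Fin k, lam j))) *
                          bellPoly (r j0)
                            (Real.exp (-(((j0 : ℕ) + 1 : ℝ) * ∑ j : Fin k, lam j)) *
                              mu j0 * t)
                  else 0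
            else 0 :=
  compound_igcp_cdf_general k lam hlam k0 mu hmu ν w t ht
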